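/- Let β ∈ (0,1] and a, c ∈ ℝ with a > 0. Define f(x) = a·x^β + c on [0,1]. Then for every nonnegative integer l, the bin B₀ = [0, 2^{-l}] satisfies |∫_{B₀} f(x)·2^l dx − f(0)| ≥ (a/(β+1))·2^{−βl}. In particular, the maximum over bins B ∈ 𝓑_l of sup_{x∈B} |Γ⁰f(x;B) − f(x)| is at least (a/(β+1))·2^{−βl}, where Γ⁰f(·;B) is the constant equal to the average of f over B under the uniform distribution. -/

import Mathlib

open Real MeasureTheory intervalIntegral

theorem integral_const_mul_rpow_add_const {β : ℝ} (hβ : -1 < β) (a c h : ℝ) :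
    ∫ x in (0 : ℝ)..h, (a * x ^ β + c) = a * (h ^ (β + 1) / (β + 1)) + h * c := by
  rw [integral_add ((intervalIntegrable_rpow' hβ).const_mul a) intervalIntegrable_const,
    intervalIntegral.integral_const_mul, integral_rpow (Or.inl hβ),
    intervalIntegral.integral_const, zero_rpow (by linarith), smul_eq_mul, sub_zero, sub_zero]

theorem inv_mul_integral_rpow_sub_apply_zero {β : ℝ} (hβ : 0 < β) (a c : ℝ) {h : ℝ}
    (hh : 0 < h) :
    h⁻¹ * (∫ x in (0 : ℝ)..h, (a * x ^ β + c)) - (a * (0 : ℝ) ^ β + c) =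
      a / (β + 1) * h ^ β := by
  rw [integral_const_mul_rpow_add_const (by linarith), zero_rpow hβ.ne', rpow_add_one hh.ne']
  field_simp
  ring

theorem stmt0_general (β a c : ℝ) (hβ0 : 0 < β) (l : ℕ) :
    (a / (β + 1)) * (2 : ℝ) ^ (-(β * l)) ≤
      |(2 : ℝ) ^ (l : ℝ) * (∫ x in (0 : ℝ)..((2 : ℝ) ^ (-(l : ℝ))), (a * x ^ β + c)) -
        (a * (0 : ℝ) ^ β + c)| ∧
    ∃ k : Fin (2 ^ l),
      ∃ x ∈ Set.Icc ((k : ℝ) * (2 : ℝ) ^ (-(l : ℝ))) (((k : ℝ) + 1) * (2 : ℝ) ^ (-(l : ℝ))),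
        (a / (β + 1)) * (2 : ℝ) ^ (-(β * l)) ≤
          |(2 : ℝ) ^ (l : ℝ) *
              (∫ y in ((k : ℝ) * (2 : ℝ) ^ (-(l : ℝ)))..(((k : ℝ) + 1) * (2 : ℝ) ^ (-(l : ℝ))),
                (a * y ^ β + c)) - (a * x ^ β + c)| := by
  have hbin : (2 : ℝ) ^ (l : ℝ) * (∫ x in (0 : ℝ)..((2 : ℝ) ^ (-(l : ℝ))), (a * x ^ β + c)) -
      (a * (0 : ℝ) ^ β + c) = (a / (β + 1)) * (2 : ℝ) ^ (-(β * l)) := by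
    have hpow : ((2 : ℝ) ^ (-(l : ℝ))) ^ β = (2 : ℝ) ^ (-(β * l)) := by
      rw [← rpow_mul zero_le_two]
      ring_nf
    rw [← hpow, ← inv_mul_integral_rpow_sub_apply_zero hβ0 a c (by positivity),
      rpow_neg zero_le_two, inv_inv]
  have hfirst := hbin.ge.trans (le_abs_self _)
  refine ⟨hfirst, ⟨0, pow_pos two_pos l⟩, 0, ⟨by simp, by positivity⟩, ?_⟩
  simpa only [Fin.val_zero, Nat.cast_zero, zero_mul, zero_add, one_mul] using hfirst

/-- the function `f x = a * x ^ β + c` is self-similar under the uniform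
distribution on `[0,1]` with parameters `l₀ = 0` and `b = a / (β + 1)`: on the bin
`B₀ = [0, 2^{-l}]` the constant approximation error at `0` is at least `(a/(β+1)) 2^{-βl}`,
and in particular some bin `B ∈ 𝓑_l` contains a point witnessing the lower bound. -/
theorem stmt0 (β a c : ℝ) (hβ0 : 0 < β) (hβ1 : β ≤ 1) (ha : 0 < a) (l : ℕ) :
    (a / (β + 1)) * (2 : ℝ) ^ (-(β * l)) ≤
      |(2 : ℝ) ^ (l : ℝ) * (∫ x in (0 : ℝ)..((2 : ℝ) ^ (-(l : ℝ))), (a * x ^ β + c)) -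
        (a * (0 : ℝ) ^ β + c)| ∧
    ∃ k : Fin (2 ^ l),
      ∃ x ∈ Set.Icc ((k : ℝ) * (2 : ℝ) ^ (-(l : ℝ))) (((k : ℝ) + 1) * (2 : ℝ) ^ (-(l : ℝ))),
        (a / (β + 1)) * (2 : ℝ) ^ (-(β * l)) ≤
          |(2 : ℝ) ^ (l : ℝ) *
              (∫ y in ((k : ℝ) * (2 : ℝ) ^ (-(l : ℝ)))..(((k : ℝ) + 1) * (2 : ℝ) ^ (-(l : ℝ))),
                (a * y ^ β + c)) - (a * x ^ β + c)| :=
  stmt0_general β a c hβ0 l
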